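/- If two policies π and π' agree at every time step on all states outside bad sets B_h, then they assign equal probability to the event that a trajectory visits a bad state: Pr_{τ∼π(μ₀)}[∃h, s_h ∈ B_h] = Pr_{τ∼π'(μ₀)}[∃h, s_h ∈ B_h]. -/
import Mathlib


attribute [local instance] Classical.propDecidable

/-- `badP P H π B h s` is the probability that a trajectory of policy `π`, currently at
state `s` at time `h`, visits a state in the bad set `B t` at some time `t` with
`h ≤ t < H`. -/
noncomputable def badP {S A : Type} [Fintype S] (P : S → A → S → ℝ)
    (H : ℕ) (π : ℕ → S → A) (B : ℕ → Set S) : ℕ → S → ℝ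
  | h, s =>
    if h < H then
      if s ∈ B h then 1
      else ∑ s' : S, P s (π h s) s' * badP P H π B (h + 1) s'
    else 0
termination_by h _ => H - h
decreasing_by omega

lemma badP_congr {S A : Type} [Fintype S] (P : S → A → S → ℝ)
    (H : ℕ) (B : ℕ → Set S) (π π' : ℕ → S → A)
    (hagree : ∀ h, h < H → ∀ s, s ∉ B h → π h s = π' h s) :
    ∀ n h s, H - h ≤ n → badP P H π B h s = badP P H π' B h s := by
  intro n
  induction n with
  | zero =>
    intro h s hn
    rw [badP, badP]
    have : ¬ h < H := by omega
    simp [this]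
  | succ n ih =>
    intro h s hn
    rw [badP, badP]
    by_cases hH : h < H
    · simp only [if_pos hH]
      by_cases hB : s ∈ B h
      · simp [hB]
      · simp only [if_neg hB]
        rw [hagree h hH s hB]
        refine Finset.sum_congr rfl fun s' _ => ?_
        rw [ih (h + 1) s' (by omega)]
    · simp [hH]

/-- if `π` and `π'` agree at every time step on all states outside the bad
sets `B h`, then the probability (over trajectories from `μ₀`) of visiting a bad state
is the same under both policies. -/
theorem badProb_eq_of_agree_off_bad {S A : Type} [Fintype S]
    (μ0 : S → ℝ) (P : S → A → S → ℝ)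
    (hμ0 : ∀ s, 0 ≤ μ0 s) (hμ0sum : ∑ s : S, μ0 s = 1)
    (hPnonneg : ∀ s a s', 0 ≤ P s a s') (hPsum : ∀ s a, ∑ s' : S, P s a s' = 1)
    (H : ℕ) (B : ℕ → Set S) (π π' : ℕ → S → A)
    (hagree : ∀ h, h < H → ∀ s, s ∉ B h → π h s = π' h s) :
    ∑ s : S, μ0 s * badP P H π B 0 s = ∑ s : S, μ0 s * badP P H π' B 0 s := by
  refine Finset.sum_congr rfl fun s _ => ?_
  rw [badP_congr P H B π π' hagree H 0 s (by omega)]
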